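/- Let σ₁, σ₂, γ be p×p complex vessel parameters, A a bounded operator on a complex Hilbert space H, and suppose B(x) : ℂᵖ → H and 𝕏(x) : H → H are differentiable with (d/dx)(B(x))σ₁ = -A B(x) σ₂ - B(x) γ, (d/dx)𝕏(x) = B(x) σ₂ B(x)*, the Lyapunov equation A 𝕏(x) + 𝕏(x) A* + B(x) σ₁ B(x)* = 0 holds, 𝕏(x)* = 𝕏(x), and 𝕏(x) is invertible for all x in an interval I. Fix λ ∈ ℂ not in the spectrum of A, and define S(λ,x) = I - B(x)* 𝕏(x)⁻¹ (λI - A)⁻¹ B(x) σ₁. If u : I → ℂᵖ is differentiable and satisfies the input equation -σ₁ u'(x) + (σ₂ λ + γ) u(x) = 0, then y(x) := S(λ,x) u(x) is differentiable and satisfies the output equation -σ₁ y'(x) + (σ₂ λ + γ₊(x)) y(x) = 0, where H₀(x) = B(x)* 𝕏(x)⁻¹ B(x) and γ₊(x) = γ + σ₂ H₀(x) σ₁ - σ₁ H₀(x) σ₂. -/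

import Mathlib

noncomputable section
open ContinuousLinearMap Matrix

/-- The continuous linear map on `EuclideanSpace ℂ (Fin n)` induced by a square matrix. -/
def mOp {n : ℕ} (m : Matrix (Fin n) (Fin n) ℂ) :
    EuclideanSpace ℂ (Fin n) →L[ℂ] EuclideanSpace ℂ (Fin n) :=
  Matrix.toEuclideanCLM (𝕜 := ℂ) m

section Aux

variable {E F G : Type*} [NormedAddCommGroup E] [InnerProductSpace ℂ E]
  [NormedAddCommGroup F] [InnerProductSpace ℂ F]
  [NormedAddCommGroup G] [InnerProductSpace ℂ G]

lemma isBBM_compR : IsBoundedBilinearMap ℝ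
    (fun p : (F →L[ℂ] G) × (E →L[ℂ] F) => p.1.comp p.2) where
  add_left x₁ x₂ y := add_comp x₁ x₂ y
  smul_left c x y := by ext v; simp
  add_right x y₁ y₂ := comp_add x y₁ y₂
  smul_right c x y := by ext v; simp
  bound := ⟨1, one_pos, fun x y => by simpa using opNorm_comp_le x y⟩

lemma isBBM_applyR : IsBoundedBilinearMap ℝ
    (fun p : (E →L[ℂ] F) × E => p.1 p.2) where
  add_left x₁ x₂ y := rfl
  smul_left c x y := rfl
  add_right x y₁ y₂ := map_add x y₁ y₂
  smul_right c x y := map_smul_of_tower x c y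
  bound := ⟨1, one_pos, fun x y => by simpa using x.le_opNorm y⟩

lemma HasDerivAt.clm_compC {c : ℝ → (F →L[ℂ] G)} {d : ℝ → (E →L[ℂ] F)}
    {c' : F →L[ℂ] G} {d' : E →L[ℂ] F} {x : ℝ}
    (hc : HasDerivAt c c' x) (hd : HasDerivAt d d' x) :
    HasDerivAt (fun t => c t ∘L d t) (c' ∘L d x + c x ∘L d') x := by
  have h := (isBBM_compR.hasFDerivAt (c x, d x)).comp_hasDerivAt x (hc.prodMk hd)
  simpa [IsBoundedBilinearMap.deriv_apply, add_comm, Function.comp_def] using h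

lemma HasDerivAt.clm_applyC {c : ℝ → (E →L[ℂ] F)} {d : ℝ → E}
    {c' : E →L[ℂ] F} {d' : E} {x : ℝ}
    (hc : HasDerivAt c c' x) (hd : HasDerivAt d d' x) :
    HasDerivAt (fun t => c t (d t)) (c' (d x) + c x d') x := by
  have h := (isBBM_applyR.hasFDerivAt (c x, d x)).comp_hasDerivAt x (hc.prodMk hd)
  simpa [IsBoundedBilinearMap.deriv_apply, add_comm, Function.comp_def] using h

lemma mOp_star {n : ℕ} (m : Matrix (Fin n) (Fin n) ℂ) :
    ContinuousLinearMap.adjoint (mOp m) = mOp mᴴ := by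
  rw [mOp, mOp, ← star_eq_adjoint, ← Matrix.star_eq_conjTranspose]
  exact (map_star (Matrix.toEuclideanCLM (𝕜 := ℂ)) m).symm

variable [CompleteSpace E] [CompleteSpace F] [CompleteSpace G]

/-- adjoint as a real-linear continuous map -/
def adjCLM (E F : Type*) [NormedAddCommGroup E] [InnerProductSpace ℂ E] [CompleteSpace E]
    [NormedAddCommGroup F] [InnerProductSpace ℂ F] [CompleteSpace F] :
    (E →L[ℂ] F) →L[ℝ] (F →L[ℂ] E) :=
  LinearMap.mkContinuous
    { toFun := ContinuousLinearMap.adjoint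
      map_add' := fun a b => map_add _ a b
      map_smul' := fun r T => by
        simp only [RingHom.id_apply]
        rw [← algebraMap_smul ℂ r T, LinearIsometryEquiv.map_smulₛₗ]
        simp [Complex.coe_algebraMap, algebraMap_smul] }
    1 (fun T => by simp [LinearIsometryEquiv.norm_map])

lemma hasDerivAt_adjointC {B : ℝ → (E →L[ℂ] F)} {b' : E →L[ℂ] F} {x : ℝ}
    (hb : HasDerivAt B b' x) :
    HasDerivAt (fun t => ContinuousLinearMap.adjoint (B t))
      (ContinuousLinearMap.adjoint b') x := by
  have h := ((adjCLM E F).hasFDerivAt.comp_hasDerivAt x hb)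
  exact h

lemma hasDerivAt_ringInverseC {X : ℝ → (F →L[ℂ] F)} {X' : F →L[ℂ] F} {x : ℝ}
    (hX : HasDerivAt X X' x) (hXu : IsUnit (X x)) :
    HasDerivAt (fun t => Ring.inverse (X t))
      (-((Ring.inverse (X x) ∘L X') ∘L Ring.inverse (X x))) x := by
  obtain ⟨u, hu⟩ := hXu
  have h0 : HasFDerivAt Ring.inverse (-mulLeftRight ℝ (F →L[ℂ] F) ↑u⁻¹ ↑u⁻¹) (X x) := by
    rw [← hu]; exact hasFDerivAt_ringInverse u
  have h := h0.comp_hasDerivAt x hX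
  simpa [Ring.inverse_unit, ← hu, mul_def, Function.comp_def] using h

lemma backlund_key {E H : Type*}
    [NormedAddCommGroup E] [InnerProductSpace ℂ E]
    [NormedAddCommGroup H] [InnerProductSpace ℂ H]
    (s1 s2 g s1i : E →L[ℂ] E) (lam : ℂ)
    (A Aa R Xi X0 : H →L[ℂ] H) (b b' : E →L[ℂ] H) (ba ba' : H →L[ℂ] E)
    (f1 : b' ∘L s1 = -(A ∘L (b ∘L s2)) - b ∘L g)
    (f1s : s1 ∘L ba' = -(s2 ∘L (ba ∘L Aa)) + g ∘L ba)
    (f3 : A ∘L X0 + X0 ∘L Aa + b ∘L (s1 ∘L ba) = 0)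
    (f4a : Xi ∘L X0 = 1) (f4b : X0 ∘L Xi = 1)
    (f5a : A ∘L R = lam • R - 1) (f5b : R ∘L A = lam • R - 1)
    (fs1 : s1 ∘L s1i = 1) :
    s1 ∘L (-(ba' ∘L (Xi ∘L (R ∘L (b ∘L s1)))
          + ba ∘L ((-((Xi ∘L (b ∘L (s2 ∘L ba))) ∘L Xi)) ∘L (R ∘L (b ∘L s1))
                 + Xi ∘L (R ∘L (b' ∘L s1)))))
     = (lam • s2 + (g + s2 ∘L ((ba ∘L (Xi ∘L b)) ∘L s1) - s1 ∘L ((ba ∘L (Xi ∘L b)) ∘L s2)))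
         ∘L (1 - ba ∘L (Xi ∘L (R ∘L (b ∘L s1))))
       - s1 ∘L ((1 - ba ∘L (Xi ∘L (R ∘L (b ∘L s1)))) ∘L (s1i ∘L (lam • s2 + g))) := by
  have f4aW : ∀ (W : E →L[ℂ] H), Xi ∘L (X0 ∘L W) = W := fun W => by
    rw [← comp_assoc, f4a]; simp [one_def]
  have f4bW : ∀ (W : E →L[ℂ] H), X0 ∘L (Xi ∘L W) = W := fun W => by
    rw [← comp_assoc, f4b]; simp [one_def]
  have fs1W : ∀ (W : E →L[ℂ] E), s1 ∘L (s1i ∘L W) = W := fun W => by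
    rw [← comp_assoc, fs1]; simp [one_def]
  have f5aW : ∀ (W : E →L[ℂ] H), A ∘L (R ∘L W) = lam • (R ∘L W) - W := fun W => by
    rw [← comp_assoc, f5a]; simp [sub_comp, smul_comp, one_def]
  have f5bW : ∀ (W : E →L[ℂ] H), R ∘L (A ∘L W) = lam • (R ∘L W) - W := fun W => by
    rw [← comp_assoc, f5b]; simp [sub_comp, smul_comp, one_def]
  have f1sW : ∀ (W : E →L[ℂ] H), s1 ∘L (ba' ∘L W)
      = -(s2 ∘L (ba ∘L (Aa ∘L W))) + g ∘L (ba ∘L W) := fun W => by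
    rw [← comp_assoc, f1s]; simp [add_comp, neg_comp, comp_assoc]
  have e1 : X0 ∘L Aa = -(A ∘L X0) - b ∘L (s1 ∘L ba) := by
    rw [← sub_eq_zero, ← f3]; abel
  have f6W : ∀ (W : E →L[ℂ] H), Aa ∘L (Xi ∘L W)
      = -(Xi ∘L (A ∘L W)) - Xi ∘L (b ∘L (s1 ∘L (ba ∘L (Xi ∘L W)))) := fun W => by
    have h := congrArg (fun T => Xi ∘L (T ∘L (Xi ∘L W))) e1
    simp only [sub_comp, neg_comp, comp_sub, comp_neg, comp_assoc] at h
    rw [f4bW] at h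
    rw [← comp_assoc, f4a] at h
    simpa [one_def] using h
  simp only [comp_add, add_comp, comp_sub, sub_comp, comp_neg, neg_comp, comp_smul, smul_comp,
    smul_sub, smul_add, smul_neg, comp_assoc, one_def, id_comp, comp_id,
    f1, f1sW, f6W, f5aW, f5bW, f4aW, f4bW, fs1W]
  abel

end Aux

set_option maxHeartbeats 2000000 in
/-- Bäcklund transformation: the transfer function `S(λ,x)` of a vessel maps solutions of
the input LDE `-σ₁ u' + (σ₂ λ + γ) u = 0` to solutions of the output LDE
`-σ₁ y' + (σ₂ λ + γ₊(x)) y = 0`. -/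
theorem backlund_transformation
    {p : ℕ} {H : Type*} [NormedAddCommGroup H] [InnerProductSpace ℂ H] [CompleteSpace H]
    -- vessel parameters
    (σ₁ σ₂ γ : Matrix (Fin p) (Fin p) ℂ)
    (hσ₁ : σ₁ᴴ = σ₁) (hσ₁inv : IsUnit σ₁) (hσ₂ : σ₂ᴴ = σ₂) (hγ : γᴴ = -γ)
    (A : H →L[ℂ] H)
    (B : ℝ → (EuclideanSpace ℂ (Fin p) →L[ℂ] H))
    (X : ℝ → (H →L[ℂ] H))
    (I : Set ℝ) (hI : IsOpen I)
    (hBdiff : ∀ x ∈ I, DifferentiableAt ℝ B x) (hXdiff : ∀ x ∈ I, DifferentiableAt ℝ X x)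
    -- vessel equations on I
    (hDB : ∀ x ∈ I, (deriv B x) ∘L mOp σ₁ = -(A ∘L B x ∘L mOp σ₂) - B x ∘L mOp γ)
    (hDX : ∀ x ∈ I, deriv X x = B x ∘L mOp σ₂ ∘L adjoint (B x))
    (hLyap : ∀ x ∈ I, A ∘L X x + X x ∘L adjoint A + B x ∘L mOp σ₁ ∘L adjoint (B x) = 0)
    (hXsa : ∀ x ∈ I, adjoint (X x) = X x)
    (hXinv : ∀ x ∈ I, IsUnit (X x))
    -- the spectral parameter, not in the spectrum of A
    (lam : ℂ) (hlam : lam ∉ spectrum ℂ A)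
    -- the transfer function S(λ,x), the moment H₀(x) and the linkage γ₊(x)
    (S : ℝ → (EuclideanSpace ℂ (Fin p) →L[ℂ] EuclideanSpace ℂ (Fin p)))
    (hS : ∀ x, S x = 1 - adjoint (B x) ∘L Ring.inverse (X x) ∘L
        Ring.inverse (algebraMap ℂ (H →L[ℂ] H) lam - A) ∘L B x ∘L mOp σ₁)
    (H₀ : ℝ → (EuclideanSpace ℂ (Fin p) →L[ℂ] EuclideanSpace ℂ (Fin p)))
    (hH₀ : ∀ x, H₀ x = adjoint (B x) ∘L Ring.inverse (X x) ∘L B x)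
    (Γ : ℝ → (EuclideanSpace ℂ (Fin p) →L[ℂ] EuclideanSpace ℂ (Fin p)))
    (hΓ : ∀ x, Γ x = mOp γ + mOp σ₂ ∘L H₀ x ∘L mOp σ₁ - mOp σ₁ ∘L H₀ x ∘L mOp σ₂)
    -- an input: a solution of the input LDE on I
    (u : ℝ → EuclideanSpace ℂ (Fin p))
    (hu_diff : ∀ x ∈ I, DifferentiableAt ℝ u x)
    (hu : ∀ x ∈ I, -(mOp σ₁ (deriv u x)) + (lam • mOp σ₂ + mOp γ) (u x) = 0)
    -- the output
    (y : ℝ → EuclideanSpace ℂ (Fin p))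
    (hy : ∀ x, y x = S x (u x)) :
    ∀ x ∈ I, DifferentiableAt ℝ y x ∧
      -(mOp σ₁ (deriv y x)) + (lam • mOp σ₂ + Γ x) (y x) = 0 := by
  intro x hx
  -- unit facts
  have hs1u : IsUnit (mOp σ₁) := by
    obtain ⟨v, hv⟩ := hσ₁inv
    refine ⟨⟨Matrix.toEuclideanCLM (𝕜 := ℂ) ↑v, Matrix.toEuclideanCLM (𝕜 := ℂ) ↑v⁻¹, ?_, ?_⟩, ?_⟩
    · rw [← _root_.map_mul, Units.mul_inv]; exact map_one _
    · rw [← _root_.map_mul, Units.inv_mul]; exact map_one _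
    · simp [mOp, hv]
  have hXu : IsUnit (X x) := hXinv x hx
  have hRu : IsUnit (algebraMap ℂ (H →L[ℂ] H) lam - A) := spectrum.notMem_iff.mp hlam
  have fs1 : mOp σ₁ ∘L Ring.inverse (mOp σ₁) = 1 := by
    rw [← mul_def]; exact Ring.mul_inverse_cancel _ hs1u
  have fs1' : Ring.inverse (mOp σ₁) ∘L mOp σ₁ = 1 := by
    rw [← mul_def]; exact Ring.inverse_mul_cancel _ hs1u
  have f4a : Ring.inverse (X x) ∘L X x = 1 := by
    rw [← mul_def]; exact Ring.inverse_mul_cancel _ hXu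
  have f4b : X x ∘L Ring.inverse (X x) = 1 := by
    rw [← mul_def]; exact Ring.mul_inverse_cancel _ hXu
  have f5a : A ∘L Ring.inverse (algebraMap ℂ (H →L[ℂ] H) lam - A)
      = lam • Ring.inverse (algebraMap ℂ (H →L[ℂ] H) lam - A) - 1 := by
    have h : (algebraMap ℂ (H →L[ℂ] H) lam - A) * Ring.inverse (algebraMap ℂ (H →L[ℂ] H) lam - A)
        = 1 := Ring.mul_inverse_cancel _ hRu
    rw [sub_mul, ← Algebra.smul_def] at h
    rw [← mul_def, ← h]; abel
  have f5b : Ring.inverse (algebraMap ℂ (H →L[ℂ] H) lam - A) ∘L A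
      = lam • Ring.inverse (algebraMap ℂ (H →L[ℂ] H) lam - A) - 1 := by
    have h : Ring.inverse (algebraMap ℂ (H →L[ℂ] H) lam - A) * (algebraMap ℂ (H →L[ℂ] H) lam - A)
        = 1 := Ring.inverse_mul_cancel _ hRu
    rw [mul_sub, ← Algebra.commutes lam, ← Algebra.smul_def] at h
    rw [← mul_def, ← h]; abel
  -- vessel equations in normalized form
  have f1 : deriv B x ∘L mOp σ₁ = -(A ∘L (B x ∘L mOp σ₂)) - B x ∘L mOp γ := hDB x hx
  have f3 : A ∘L X x + X x ∘L adjoint A + B x ∘L (mOp σ₁ ∘L adjoint (B x)) = 0 := hLyap x hx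
  have f1s : mOp σ₁ ∘L adjoint (deriv B x)
      = -(mOp σ₂ ∘L (adjoint (B x) ∘L adjoint A)) + mOp γ ∘L adjoint (B x) := by
    have h := congrArg ContinuousLinearMap.adjoint f1
    simp only [map_sub, map_neg, adjoint_comp] at h
    rw [mOp_star σ₁, mOp_star σ₂, mOp_star γ, hσ₁, hσ₂, hγ] at h
    rw [show mOp (-γ) = -(mOp γ) from map_neg (Matrix.toEuclideanCLM (𝕜 := ℂ)) γ] at h
    rw [h]
    simp only [neg_comp, comp_assoc]
    abel
  -- derivative of the transfer function
  have hb : HasDerivAt B (deriv B x) x := (hBdiff x hx).hasDerivAt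
  have hX : HasDerivAt X (B x ∘L (mOp σ₂ ∘L adjoint (B x))) x := by
    have h := (hXdiff x hx).hasDerivAt
    rwa [hDX x hx] at h
  have hba : HasDerivAt (fun t => ContinuousLinearMap.adjoint (B t))
      (ContinuousLinearMap.adjoint (deriv B x)) x := hasDerivAt_adjointC hb
  have hXiD : HasDerivAt (fun t => Ring.inverse (X t))
      (-((Ring.inverse (X x) ∘L (B x ∘L (mOp σ₂ ∘L adjoint (B x)))) ∘L Ring.inverse (X x))) x :=
    hasDerivAt_ringInverseC hX hXu
  have h1 : HasDerivAt (fun t => B t ∘L mOp σ₁) (deriv B x ∘L mOp σ₁) x := by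
    simpa using hb.clm_compC (hasDerivAt_const x (mOp σ₁))
  have h2 : HasDerivAt
      (fun t => Ring.inverse (algebraMap ℂ (H →L[ℂ] H) lam - A) ∘L (B t ∘L mOp σ₁))
      (Ring.inverse (algebraMap ℂ (H →L[ℂ] H) lam - A) ∘L (deriv B x ∘L mOp σ₁)) x := by
    simpa using (hasDerivAt_const x
      (Ring.inverse (algebraMap ℂ (H →L[ℂ] H) lam - A))).clm_compC h1
  have h3 := hXiD.clm_compC h2
  have h4 := hba.clm_compC h3
  have hSD : HasDerivAt S
      (-(ContinuousLinearMap.adjoint (deriv B x) ∘L (Ring.inverse (X x) ∘L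
          (Ring.inverse (algebraMap ℂ (H →L[ℂ] H) lam - A) ∘L (B x ∘L mOp σ₁)))
        + ContinuousLinearMap.adjoint (B x) ∘L
          ((-((Ring.inverse (X x) ∘L (B x ∘L (mOp σ₂ ∘L adjoint (B x)))) ∘L Ring.inverse (X x)))
              ∘L (Ring.inverse (algebraMap ℂ (H →L[ℂ] H) lam - A) ∘L (B x ∘L mOp σ₁))
           + Ring.inverse (X x) ∘L (Ring.inverse (algebraMap ℂ (H →L[ℂ] H) lam - A)
              ∘L (deriv B x ∘L mOp σ₁))))) x := by
    rw [funext hS]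
    simpa [Pi.sub_def] using (hasDerivAt_const x
      (1 : EuclideanSpace ℂ (Fin p) →L[ℂ] EuclideanSpace ℂ (Fin p))).sub h4
  -- the key operator identity
  have hkey := backlund_key (mOp σ₁) (mOp σ₂) (mOp γ) (Ring.inverse (mOp σ₁)) lam
      A (ContinuousLinearMap.adjoint A) (Ring.inverse (algebraMap ℂ (H →L[ℂ] H) lam - A))
      (Ring.inverse (X x)) (X x) (B x) (deriv B x)
      (ContinuousLinearMap.adjoint (B x)) (ContinuousLinearMap.adjoint (deriv B x))
      f1 f1s f3 f4a f4b f5a f5b fs1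
  -- derivative of the output
  have hu' : HasDerivAt u (deriv u x) x := (hu_diff x hx).hasDerivAt
  have hyD := hSD.clm_applyC hu'
  rw [show (fun t => S t (u t)) = y from (funext hy).symm] at hyD
  generalize hDg : -(ContinuousLinearMap.adjoint (deriv B x) ∘L (Ring.inverse (X x) ∘L
          (Ring.inverse (algebraMap ℂ (H →L[ℂ] H) lam - A) ∘L (B x ∘L mOp σ₁)))
        + ContinuousLinearMap.adjoint (B x) ∘L
          ((-((Ring.inverse (X x) ∘L (B x ∘L (mOp σ₂ ∘L adjoint (B x)))) ∘L Ring.inverse (X x)))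
              ∘L (Ring.inverse (algebraMap ℂ (H →L[ℂ] H) lam - A) ∘L (B x ∘L mOp σ₁))
           + Ring.inverse (X x) ∘L (Ring.inverse (algebraMap ℂ (H →L[ℂ] H) lam - A)
              ∘L (deriv B x ∘L mOp σ₁)))) = D at hkey hyD
  refine ⟨hyD.differentiableAt, ?_⟩
  rw [hyD.deriv]
  -- M recovers the derivative of the input
  have hMu : Ring.inverse (mOp σ₁) ((lam • mOp σ₂ + mOp γ) (u x)) = deriv u x := by
    have h := hu x hx
    have h2 : (lam • mOp σ₂ + mOp γ) (u x) = mOp σ₁ (deriv u x) := by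
      rw [← sub_eq_zero, ← h]; abel
    rw [h2, ← ContinuousLinearMap.comp_apply, fs1', ContinuousLinearMap.one_apply]
  -- finish
  have happ := congrArg (fun T => T (u x)) hkey
  simp only [ContinuousLinearMap.comp_apply, ContinuousLinearMap.sub_apply,
    ContinuousLinearMap.one_apply] at happ
  rw [hMu] at happ
  rw [hy x, hS x, hΓ x, hH₀ x, map_add]
  simp only [ContinuousLinearMap.comp_apply, ContinuousLinearMap.sub_apply,
    ContinuousLinearMap.one_apply]
  rw [happ]
  abel
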